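/- (Theorem 3.1, existence and strong-coupling convergence.) Suppose E[V − τ] < 0 and P( sup_{j≥1} S_j ≤ 0 ) > 0. Then there exists a measurable U : Ω → [0,∞) satisfying U ∘ θ = φ(U(·), ·) P-a.s., such that for every measurable W : Ω → [0,∞) the sequence Z_n^W converges with strong coupling to (U ∘ θ^n): P-a.s. there exists N ∈ ℕ with Z_n^W(ω) = U(θ^n ω) for all n ≥ N, where Z_0^W = W and Z_{n+1}^W(ω) = φ( Z_n^W(ω), θ^n ω ). -/

import Mathlib

open MeasureTheory Filter

noncomputable section

variable {Ω : Type*}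

/-- ψ(y, ω) = max( max( y + V ω, σ ω + D ω + V ω ) − τ ω, 0 ). -/
def psi (σ D V τ : Ω → ℝ) (y : ℝ) (ω : Ω) : ℝ :=
  max (max (y + V ω) (σ ω + D ω + V ω) - τ ω) 0

/-- φ(x, ω): the one-step workload map, defined by its four cases:
x + σ − τ if x + σ − τ > 0 and x ≤ D; x − τ if x − τ > 0 and x > D;
max(x + σ + V − τ, 0) if x + σ − τ ≤ 0 and x ≤ D; 0 if x − τ ≤ 0 and x > D. -/
def phi (σ D V τ : Ω → ℝ) (x : ℝ) (ω : Ω) : ℝ :=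
  if x ≤ D ω then
    if 0 < x + σ ω - τ ω then x + σ ω - τ ω else max (x + σ ω + V ω - τ ω) 0
  else
    if 0 < x - τ ω then x - τ ω else 0

/-- S_j(ω) = σ(θ^{-j}ω) + D(θ^{-j}ω) + Σ_{i=1}^{j} V(θ^{-i}ω) − Σ_{i=1}^{j} τ(θ^{-i}ω),
where `θi` denotes the inverse of `θ`. -/
def Sj (θi : Ω → Ω) (σ D V τ : Ω → ℝ) (j : ℕ) (ω : Ω) : ℝ :=
  σ (θi^[j] ω) + D (θi^[j] ω)
    + ∑ i ∈ Finset.Icc 1 j, V (θi^[i] ω)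
    - ∑ i ∈ Finset.Icc 1 j, τ (θi^[i] ω)

/-- M_∞ = max(0, sup_{j ≥ 1} S_j) ∈ [0,∞]. -/
def Minf (θi : Ω → Ω) (σ D V τ : Ω → ℝ) (ω : Ω) : EReal :=
  max 0 (⨆ j : ℕ, ((Sj θi σ D V τ (j + 1) ω : ℝ) : EReal))

/-- The workload sequence Z_0^W = W, Z_{n+1}^W(ω) = φ(Z_n^W(ω), θⁿω). -/
def Zseq (θf : Ω → Ω) (σ D V τ : Ω → ℝ) (W : Ω → ℝ) : ℕ → Ω → ℝ
  | 0 => W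
  | n + 1 => fun ω => phi σ D V τ (Zseq θf σ D V τ W n ω) (θf^[n] ω)

/-- The majorizing sequence Y_0^Y = Y, Y_{n+1}^Y(ω) = ψ(Y_n^Y(ω), θⁿω). -/
def Yseq (θf : Ω → Ω) (σ D V τ : Ω → ℝ) (Y : Ω → ℝ) : ℕ → Ω → ℝ
  | 0 => Y
  | n + 1 => fun ω => psi σ D V τ (Yseq θf σ D V τ Y n ω) (θf^[n] ω)

/-!
Loynes' construction. Let `A = {sup_{j ≥ 1} S_j ≤ 0}`. The workload `Z⁰` of the system started
empty is dominated by the majorant `Y⁰`, a maximum of partial sums that is `≤ 0` at times in `A`;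
so if `θ^{-m} ω ∈ A`, the system started empty at any time `-n ≤ -m` is empty again at time `-m`,
and its workload at time `0` no longer depends on `n`. The limit `U` therefore solves
`U ∘ θ = φ(U, ·)` wherever the past orbit meets `A`, which by ergodicity and Poincaré recurrence
is almost everywhere. For the coupling, `Z^W_n ≤ max (W + Σ_{k<n} (V - τ) ∘ θ^k, Y⁰_n)`; the
Birkhoff sums of `V - τ` tend to `-∞` by Garsia's maximal ergodic inequality, so at one of the
infinitely many future visits of the orbit to `A` both `Z^W_n` and `U ∘ θ^n` vanish, and from
then on they follow the same recursion.
-/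

/-- `max (0, S₁, …, S_N)` of the Birkhoff sums `S_n` of `g`, in the recursive form of Garsia's
proof of the maximal ergodic theorem. -/
def birkhoffMax {α : Type*} (f : α → α) (g : α → ℝ) : ℕ → α → ℝ
  | 0 => 0
  | N + 1 => fun x => max (g x + birkhoffMax f g N (f x)) 0

section BirkhoffMax

variable {α : Type*} {f : α → α} {g : α → ℝ}

lemma birkhoffMax_nonneg (N : ℕ) (x : α) : 0 ≤ birkhoffMax f g N x := by
  cases N with
  | zero => exact le_rfl
  | succ N => exact le_max_right _ _

lemma birkhoffMax_le_succ (N : ℕ) (x : α) : birkhoffMax f g N x ≤ birkhoffMax f g (N + 1) x := by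
  induction N generalizing x with
  | zero => exact birkhoffMax_nonneg 1 x
  | succ N ih => exact max_le_max (by linarith [ih (f x)]) le_rfl

lemma birkhoffSum_le_birkhoffMax {n N : ℕ} (hnN : n ≤ N) (x : α) :
    birkhoffSum f g n x ≤ birkhoffMax f g N x := by
  induction n generalizing N x with
  | zero => exact birkhoffMax_nonneg N x
  | succ n ih =>
    obtain ⟨M, rfl⟩ : ∃ M, N = M + 1 := ⟨N - 1, by omega⟩
    rw [birkhoffSum_succ']
    exact le_max_of_le_left (by linarith [ih (by omega : n ≤ M) (f x)])

lemma bddAbove_birkhoffSum_apply_iff (x : α) :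
    BddAbove (Set.range fun n => birkhoffSum f g n (f x))
      ↔ BddAbove (Set.range fun n => birkhoffSum f g n x) := by
  simp only [bddAbove_def, Set.forall_mem_range]
  constructor
  · rintro ⟨C, hC⟩
    refine ⟨max 0 (g x + C), fun n => ?_⟩
    cases n with
    | zero => exact le_max_left _ _
    | succ n => exact le_max_of_le_right (by rw [birkhoffSum_succ']; linarith [hC n])
  · rintro ⟨C, hC⟩
    exact ⟨C - g x, fun n => by linarith [birkhoffSum_succ' f g n x, hC (n + 1)]⟩

variable [MeasurableSpace α] {μ : Measure α}

lemma measurable_birkhoffMax (hf : Measurable f) (hg : Measurable g) (N : ℕ) :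
    Measurable (birkhoffMax f g N) := by
  induction N with
  | zero => exact measurable_const
  | succ N ih => exact (hg.add (ih.comp hf)).max measurable_const

lemma integrable_birkhoffMax (hf : MeasurePreserving f μ μ) (hg : Integrable g μ) (N : ℕ) :
    Integrable (birkhoffMax f g N) μ := by
  induction N with
  | zero => exact integrable_zero α ℝ μ
  | succ N ih => exact (hg.add (hf.integrable_comp_of_integrable ih)).pos_part

/-- Garsia's maximal ergodic inequality. -/
theorem MeasureTheory.MeasurePreserving.setIntegral_birkhoffMax_pos_nonneg
    (hf : MeasurePreserving f μ μ) (hgm : Measurable g) (hg : Integrable g μ) (N : ℕ) :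
    0 ≤ ∫ x in {x | 0 < birkhoffMax f g N x}, g x ∂μ := by
  set R := birkhoffMax f g N
  set E := {x | 0 < R x}
  have hRm : Measurable R := measurable_birkhoffMax hf.measurable hgm N
  have hR : Integrable R μ := integrable_birkhoffMax hf hg N
  have hRf : Integrable (fun x => R (f x)) μ := hf.integrable_comp_of_integrable hR
  have hdiff : Integrable (fun x => R x - R (f x)) μ := hR.sub hRf
  have hE : MeasurableSet E := measurableSet_lt measurable_const hRm
  have hRf_int : ∫ x, R (f x) ∂μ = ∫ x, R x ∂μ := by
    rw [← integral_map hf.measurable.aemeasurable (hRm.aestronglyMeasurable), hf.map_eq]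
  -- Off `E` we have `R = 0 ≤ R ∘ f`, and on `E` the recursion gives `R ≤ g + R ∘ f`.
  calc (0 : ℝ) = ∫ x, (R x - R (f x)) ∂μ := by rw [integral_sub hR hRf, hRf_int, sub_self]
    _ ≤ ∫ x in E, (R x - R (f x)) ∂μ := by
      rw [← integral_add_compl hE hdiff]
      refine add_le_of_nonpos_right (setIntegral_nonpos hE.compl fun x hx => ?_)
      have : R x = 0 := le_antisymm (not_lt.1 hx) (birkhoffMax_nonneg N x)
      linarith [birkhoffMax_nonneg (f := f) (g := g) N (f x)]
    _ ≤ ∫ x in E, g x ∂μ := by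
      refine setIntegral_mono_on hdiff.integrableOn hg.integrableOn hE fun x hx => ?_
      have hsucc : R x ≤ max (g x + R (f x)) 0 := birkhoffMax_le_succ N x
      have hpos : 0 < R x := hx
      have : R x ≤ g x + R (f x) := by
        rcases le_max_iff.1 hsucc with h | h
        · exact h
        · linarith
      linarith

end BirkhoffMax

namespace Ergodic

variable {α : Type*} [MeasurableSpace α] {μ : Measure α} {f : α → α} {g : α → ℝ}

theorem ae_frequently_iterate_mem [IsFiniteMeasure μ] (hf : Ergodic f μ) {s : Set α}
    (hs : MeasurableSet s) (hμs : μ s ≠ 0) :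
    ∀ᵐ x ∂μ, ∃ᶠ n in atTop, f^[n] x ∈ s := by
  set F := {x | ∃ᶠ n in atTop, f^[n] x ∈ s}
  have hF : MeasurableSet F := by
    have : F = limsup (fun n => f^[n] ⁻¹' s) atTop := by
      ext x; exact (mem_limsup_iff_frequently_mem (s := fun n => f^[n] ⁻¹' s)).symm
    exact this ▸ MeasurableSet.measurableSet_limsup fun n => hf.measurable.iterate n hs
  have hinv : f ⁻¹' F = F := by
    ext x
    have hshift := frequently_map (P := fun n => f^[n] x ∈ s) (m := (· + 1)) (f := atTop)
    rw [map_add_atTop_eq_nat] at hshift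
    exact hshift.symm
  rcases hf.ae_empty_or_univ hF hinv with hnull | hfull
  · refine absurd (le_antisymm ?_ zero_le) hμs
    have hrec : s ≤ᵐ[μ] F :=
      hf.toMeasurePreserving.conservative.ae_mem_imp_frequently_image_mem hs.nullMeasurableSet
    calc μ s ≤ μ F := measure_mono_ae hrec
      _ = 0 := by rw [measure_congr hnull, measure_empty]
  · exact mem_ae_iff.2 (ae_eq_univ.1 hfull)

theorem ae_bddAbove_birkhoffSum (hf : Ergodic f μ) (hgm : Measurable g) (hg : Integrable g μ)
    (hneg : ∫ x, g x ∂μ < 0) :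
    ∀ᵐ x ∂μ, BddAbove (Set.range fun n => birkhoffSum f g n x) := by
  set B := {x | BddAbove (Set.range fun n => birkhoffSum f g n x)}
  have hB : MeasurableSet B := measurableSet_bddAbove_range fun n =>
    Finset.measurable_sum _ fun i _ => hgm.comp (hf.measurable.iterate i)
  have hinv : f ⁻¹' B = B := Set.ext bddAbove_birkhoffSum_apply_iff
  rcases hf.ae_empty_or_univ hB hinv with hnull | hfull
  · exfalso
    set E : ℕ → Set α := fun N => {x | 0 < birkhoffMax f g N x}
    have hE (N : ℕ) : MeasurableSet (E N) :=
      measurableSet_lt measurable_const (measurable_birkhoffMax hf.measurable hgm N)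
    have hmono : Monotone E := monotone_nat_of_le_succ fun N x hx =>
      lt_of_lt_of_le hx (birkhoffMax_le_succ N x)
    have hcover : Bᶜ ⊆ ⋃ N, E N := fun x hx => by
      obtain ⟨n, hn⟩ : ∃ n, 0 < birkhoffSum f g n x := by
        by_contra! h
        exact hx ⟨0, Set.forall_mem_range.2 h⟩
      exact Set.mem_iUnion.2 ⟨n, hn.trans_le (birkhoffSum_le_birkhoffMax le_rfl x)⟩
    have hunion : (⋃ N, E N) =ᵐ[μ] Set.univ := ae_eq_univ.2 <|
      measure_mono_null (Set.compl_subset_comm.1 hcover) (by simpa using measure_congr hnull)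
    have hlim := tendsto_setIntegral_of_monotone hE hmono hg.integrableOn
    rw [setIntegral_congr_set hunion, setIntegral_univ] at hlim
    exact hneg.not_ge (ge_of_tendsto' hlim
      (hf.toMeasurePreserving.setIntegral_birkhoffMax_pos_nonneg hgm hg))
  · exact mem_ae_iff.2 (ae_eq_univ.1 hfull)

theorem ae_tendsto_birkhoffSum_atBot [IsFiniteMeasure μ] (hf : Ergodic f μ) (hgm : Measurable g)
    (hg : Integrable g μ) (hneg : ∫ x, g x ∂μ < 0) :
    ∀ᵐ x ∂μ, Tendsto (fun n => birkhoffSum f g n x) atTop atBot := by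
  set m := μ.real Set.univ
  -- Shifting `g` by this `c > 0` keeps its integral negative: it becomes `(∫ g) / (m + 1)`.
  set c := -(∫ x, g x ∂μ) / (m + 1)
  have hm : 0 ≤ m := measureReal_nonneg
  have hc : 0 < c := div_pos (neg_pos.2 hneg) (by positivity)
  have hneg' : ∫ x, (g x + c) ∂μ < 0 := by
    rw [integral_add hg (integrable_const c), integral_const, smul_eq_mul]
    have : m * c + ∫ x, g x ∂μ = (∫ x, g x ∂μ) / (m + 1) := by
      simp only [c]; field_simp; ring
    have : (∫ x, g x ∂μ) / (m + 1) < 0 := div_neg_of_neg_of_pos hneg (by positivity)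
    linarith
  filter_upwards [hf.ae_bddAbove_birkhoffSum (hgm.add measurable_const)
    (hg.add (integrable_const c)) hneg'] with x ⟨C, hC⟩
  have hle (n : ℕ) : birkhoffSum f g n x ≤ C - n * c := by
    have hshift : birkhoffSum f (g + fun _ => c) n x = birkhoffSum f g n x + n * c := by
      simp [birkhoffSum, Finset.sum_add_distrib]
    linarith [hC ⟨n, rfl⟩]
  refine tendsto_atBot_mono hle (tendsto_atBot_add_const_left _ C ?_)
  exact tendsto_neg_atTop_atBot.comp (tendsto_natCast_atTop_atTop.atTop_mul_const hc)

end Ergodic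

section Workload

variable {σ D V τ : Ω → ℝ}

lemma phi_nonneg (x : ℝ) (ω : Ω) : 0 ≤ phi σ D V τ x ω := by
  unfold phi
  split_ifs <;> linarith [le_max_right (x + σ ω + V ω - τ ω) 0]

lemma psi_eq_max (y : ℝ) (ω : Ω) :
    psi σ D V τ y ω = max (y + V ω - τ ω) (max (σ ω + D ω + V ω - τ ω) 0) := by
  rw [psi, ← max_sub_sub_right, max_assoc]

lemma phi_le_psi {x y : ℝ} {ω : Ω} (hV : 0 ≤ V ω) (hxy : x ≤ y) :
    phi σ D V τ x ω ≤ psi σ D V τ y ω := by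
  rw [psi_eq_max]
  unfold phi
  split_ifs
  · exact le_max_of_le_right (le_max_of_le_left (by linarith))
  · exact le_max_of_le_right (max_le_max (by linarith) le_rfl)
  · exact le_max_of_le_left (by linarith)
  · exact le_max_of_le_right (le_max_right _ _)

variable {f : Ω → Ω}

lemma Zseq_nonneg {W : Ω → ℝ} {ω : Ω} (hW : 0 ≤ W ω) (n : ℕ) :
    0 ≤ Zseq f σ D V τ W n ω := by
  cases n with
  | zero => exact hW
  | succ n => exact phi_nonneg _ _

lemma Zseq_le_Yseq (hV : ∀ ω, 0 ≤ V ω) (W : Ω → ℝ) (n : ℕ) (ω : Ω) :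
    Zseq f σ D V τ W n ω ≤ Yseq f σ D V τ W n ω := by
  induction n with
  | zero => exact le_rfl
  | succ n ih => exact phi_le_psi (hV _) ih

lemma Zseq_add_apply (W : Ω → ℝ) (k m : ℕ) (ω : Ω) :
    Zseq f σ D V τ W (k + m) ω
      = Zseq f σ D V τ (fun _ => Zseq f σ D V τ W k ω) m (f^[k] ω) := by
  induction m with
  | zero => rfl
  | succ m ih =>
    change phi σ D V τ (Zseq f σ D V τ W (k + m) ω) (f^[k + m] ω) = _
    rw [ih, add_comm k m, Function.iterate_add_apply]
    rfl

lemma Zseq_eq_of_le {W : Ω → ℝ} {ω : Ω} {u : ℕ → ℝ}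
    (hu : ∀ n, u (n + 1) = phi σ D V τ (u n) (f^[n] ω)) {N : ℕ}
    (hN : Zseq f σ D V τ W N ω = u N) {n : ℕ} (hn : N ≤ n) :
    Zseq f σ D V τ W n ω = u n := by
  induction n, hn using Nat.le_induction with
  | base => exact hN
  | succ n _ ih => rw [hu, ← ih]; rfl

lemma Yseq_le_max (W : Ω → ℝ) (n : ℕ) (ω : Ω) :
    Yseq f σ D V τ W n ω
      ≤ max (W ω + birkhoffSum f (V - τ) n ω) (Yseq f σ D V τ 0 n ω) := by
  induction n with
  | zero => simp [Yseq]
  | succ n ih =>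
    change psi σ D V τ _ _ ≤ max _ (psi σ D V τ _ _)
    rw [psi_eq_max, psi_eq_max, birkhoffSum_succ, Pi.sub_apply]
    refine max_le ?_ (le_max_of_le_right (le_max_right _ _))
    rcases le_max_iff.1 ih with h | h
    · exact le_max_of_le_left (by linarith)
    · exact le_max_of_le_right (le_max_of_le_left (by linarith))

end Workload

/-- Borovkov's renovating event `sup_{j ≥ 1} S_j ≤ 0`. -/
def renovatingSet (θi : Ω → Ω) (σ D V τ : Ω → ℝ) : Set Ω :=
  {ω | ∀ j : ℕ, Sj θi σ D V τ (j + 1) ω ≤ 0}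

lemma Sj_zero (θi : Ω → Ω) (σ D V τ : Ω → ℝ) (ω : Ω) : Sj θi σ D V τ 0 ω = σ ω + D ω := by
  simp [Sj]

section Renovation

variable {σ D V τ : Ω → ℝ} (e : Ω ≃ Ω)

lemma sum_Icc_iterate_symm_succ (h : Ω → ℝ) (j : ℕ) (ω : Ω) :
    ∑ i ∈ Finset.Icc 1 (j + 1), h (e.symm^[i] (e ω))
      = h ω + ∑ i ∈ Finset.Icc 1 j, h (e.symm^[i] ω) := by
  induction j with
  | zero => simp
  | succ j ih =>
    rw [Finset.sum_Icc_succ_top (by omega), ih, Finset.sum_Icc_succ_top (by omega),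
      Function.iterate_succ_apply, e.symm_apply_apply, add_assoc]

lemma Sj_succ_apply (j : ℕ) (ω : Ω) :
    Sj e.symm σ D V τ (j + 1) (e ω) = Sj e.symm σ D V τ j ω + V ω - τ ω := by
  simp only [Sj, sum_Icc_iterate_symm_succ, Function.iterate_succ_apply, e.symm_apply_apply]
  ring

lemma Yseq_zero_le_of_Sj_le (hσD : ∀ ω, 0 ≤ σ ω + D ω) {n : ℕ} {ω : Ω} {c : ℝ} (hc : 0 ≤ c)
    (hS : ∀ j < n, Sj e.symm σ D V τ (j + 1) (e^[n] ω) ≤ c) :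
    Yseq e σ D V τ 0 n ω ≤ c := by
  induction n generalizing c with
  | zero => exact hc
  | succ n ih =>
    have hS' (j : ℕ) : Sj e.symm σ D V τ (j + 1) (e^[n + 1] ω)
        = Sj e.symm σ D V τ j (e^[n] ω) + V (e^[n] ω) - τ (e^[n] ω) := by
      rw [Function.iterate_succ_apply', Sj_succ_apply]
    have hfirst := hS 0 n.succ_pos
    rw [hS', Sj_zero] at hfirst
    have hY : Yseq e σ D V τ 0 n ω ≤ c - (V (e^[n] ω) - τ (e^[n] ω)) := by
      refine ih (by linarith [hσD (e^[n] ω)]) fun j hj => ?_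
      have := hS (j + 1) (by omega)
      rw [hS'] at this
      linarith
    change psi σ D V τ _ _ ≤ c
    rw [psi_eq_max]
    exact max_le (by linarith) (max_le (by linarith) hc)

lemma Yseq_zero_nonpos_of_mem (hσD : ∀ ω, 0 ≤ σ ω + D ω) {n : ℕ} {ω : Ω}
    (hω : e^[n] ω ∈ renovatingSet e.symm σ D V τ) : Yseq e σ D V τ 0 n ω ≤ 0 :=
  Yseq_zero_le_of_Sj_le e hσD le_rfl fun j _ => hω j

lemma Zseq_eq_zero_of_mem (hσD : ∀ ω, 0 ≤ σ ω + D ω) (hV : ∀ ω, 0 ≤ V ω) {W : Ω → ℝ}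
    {n : ℕ} {ω : Ω} (hW : 0 ≤ W ω) (hdrift : W ω + birkhoffSum e (V - τ) n ω ≤ 0)
    (hω : e^[n] ω ∈ renovatingSet e.symm σ D V τ) : Zseq e σ D V τ W n ω = 0 := by
  refine le_antisymm ?_ (Zseq_nonneg hW n)
  calc Zseq e σ D V τ W n ω
      ≤ max (W ω + birkhoffSum e (V - τ) n ω) (Yseq e σ D V τ 0 n ω) :=
        (Zseq_le_Yseq hV W n ω).trans (Yseq_le_max W n ω)
    _ ≤ 0 := max_le hdrift (Yseq_zero_nonpos_of_mem e hσD hω)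

end Renovation

/-- Loynes' scheme: the workload at time `0` of the system started empty at time `-n`. -/
def loynesSeq (e : Ω ≃ Ω) (σ D V τ : Ω → ℝ) (n : ℕ) (ω : Ω) : ℝ :=
  Zseq e σ D V τ 0 n (e.symm^[n] ω)

/-- The limit of `loynesSeq`, which is eventually constant wherever the orbit has visited the
renovating set in the past; the `liminf` in `ℝ≥0∞` just makes it a measurable total function. -/
def loynes (e : Ω ≃ Ω) (σ D V τ : Ω → ℝ) (ω : Ω) : ℝ :=
  (liminf (fun n => ENNReal.ofReal (loynesSeq e σ D V τ n ω)) atTop).toReal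

section Loynes

variable {σ D V τ : Ω → ℝ} (e : Ω ≃ Ω)

lemma loynes_nonneg (ω : Ω) : 0 ≤ loynes e σ D V τ ω := ENNReal.toReal_nonneg

lemma loynesSeq_succ_apply (n : ℕ) (ω : Ω) :
    loynesSeq e σ D V τ (n + 1) (e ω) = phi σ D V τ (loynesSeq e σ D V τ n ω) ω := by
  have hback : e.symm^[n + 1] (e ω) = e.symm^[n] ω := by
    rw [Function.iterate_succ_apply, e.symm_apply_apply]
  change phi σ D V τ (Zseq e σ D V τ 0 n (e.symm^[n + 1] (e ω))) (e^[n] (e.symm^[n + 1] (e ω))) = _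
  rw [hback, (e.rightInverse_symm.iterate n) ω]
  rfl

lemma loynesSeq_eq_of_mem (hσD : ∀ ω, 0 ≤ σ ω + D ω) (hV : ∀ ω, 0 ≤ V ω) {m n : ℕ} {ω : Ω}
    (hω : e.symm^[m] ω ∈ renovatingSet e.symm σ D V τ) (hmn : m ≤ n) :
    loynesSeq e σ D V τ n ω = loynesSeq e σ D V τ m ω := by
  obtain ⟨k, rfl⟩ := Nat.exists_eq_add_of_le' hmn
  have hx : e^[k] (e.symm^[k + m] ω) = e.symm^[m] ω := by
    rw [Function.iterate_add_apply]
    exact (e.rightInverse_symm.iterate k) _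
  have hempty : Zseq e σ D V τ 0 k (e.symm^[k + m] ω) = 0 :=
    le_antisymm ((Zseq_le_Yseq hV 0 k _).trans (Yseq_zero_nonpos_of_mem e hσD (hx ▸ hω)))
      (Zseq_nonneg (W := 0) le_rfl k)
  change Zseq e σ D V τ 0 (k + m) (e.symm^[k + m] ω) = _
  rw [Zseq_add_apply, hempty, hx]
  rfl

lemma loynes_eq_of_mem (hσD : ∀ ω, 0 ≤ σ ω + D ω) (hV : ∀ ω, 0 ≤ V ω) {m : ℕ} {ω : Ω}
    (hω : e.symm^[m] ω ∈ renovatingSet e.symm σ D V τ) :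
    loynes e σ D V τ ω = loynesSeq e σ D V τ m ω := by
  have hconst : (fun n => ENNReal.ofReal (loynesSeq e σ D V τ n ω))
      =ᶠ[atTop] fun _ => ENNReal.ofReal (loynesSeq e σ D V τ m ω) :=
    eventually_atTop.2 ⟨m, fun n hmn =>
      congrArg ENNReal.ofReal (loynesSeq_eq_of_mem e hσD hV hω hmn)⟩
  rw [loynes, liminf_congr hconst, liminf_const]
  exact ENNReal.toReal_ofReal (Zseq_nonneg (W := 0) le_rfl m)

lemma loynes_eq_zero_of_mem (hσD : ∀ ω, 0 ≤ σ ω + D ω) (hV : ∀ ω, 0 ≤ V ω) {ω : Ω}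
    (hω : ω ∈ renovatingSet e.symm σ D V τ) : loynes e σ D V τ ω = 0 :=
  loynes_eq_of_mem (m := 0) e hσD hV hω

lemma loynes_apply_eq_phi (hσD : ∀ ω, 0 ≤ σ ω + D ω) (hV : ∀ ω, 0 ≤ V ω) {ω : Ω}
    (hω : ∃ m, e.symm^[m] ω ∈ renovatingSet e.symm σ D V τ) :
    loynes e σ D V τ (e ω) = phi σ D V τ (loynes e σ D V τ ω) ω := by
  obtain ⟨m, hm⟩ := hω
  have hm' : e.symm^[m + 1] (e ω) ∈ renovatingSet e.symm σ D V τ := by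
    rwa [Function.iterate_succ_apply, e.symm_apply_apply]
  rw [loynes_eq_of_mem e hσD hV hm', loynes_eq_of_mem e hσD hV hm, loynesSeq_succ_apply]

end Loynes

section Measurability

variable [MeasurableSpace Ω] {σ D V τ : Ω → ℝ}
  (hσ : Measurable σ) (hD : Measurable D) (hV : Measurable V) (hτ : Measurable τ)
include hσ hD hV hτ

lemma Measurable.phi {Z : Ω → ℝ} {B : Ω → Ω} (hZ : Measurable Z) (hB : Measurable B) :
    Measurable fun ω => phi σ D V τ (Z ω) (B ω) := by
  have hσB := hσ.comp hB
  have hτB := hτ.comp hB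
  unfold _root_.phi
  refine Measurable.ite (measurableSet_le hZ (hD.comp hB)) ?_ ?_
  · exact Measurable.ite (measurableSet_lt measurable_const ((hZ.add hσB).sub hτB))
      ((hZ.add hσB).sub hτB) ((((hZ.add hσB).add (hV.comp hB)).sub hτB).max measurable_const)
  · exact Measurable.ite (measurableSet_lt measurable_const (hZ.sub hτB)) (hZ.sub hτB)
      measurable_const

lemma measurable_Zseq {f : Ω → Ω} (hf : Measurable f) {W : Ω → ℝ} (hW : Measurable W) (n : ℕ) :
    Measurable (Zseq f σ D V τ W n) := by
  induction n with
  | zero => exact hW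
  | succ n ih => exact Measurable.phi hσ hD hV hτ ih (hf.iterate n)

lemma measurable_Sj {θi : Ω → Ω} (hθi : Measurable θi) (j : ℕ) :
    Measurable (Sj θi σ D V τ j) :=
  (((hσ.comp (hθi.iterate j)).add (hD.comp (hθi.iterate j))).add
    (Finset.measurable_sum _ fun i _ => hV.comp (hθi.iterate i))).sub
    (Finset.measurable_sum _ fun i _ => hτ.comp (hθi.iterate i))

lemma measurableSet_renovatingSet {θi : Ω → Ω} (hθi : Measurable θi) :
    MeasurableSet (renovatingSet θi σ D V τ) := by
  simp only [renovatingSet, Set.ofPred_forall]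
  exact .iInter fun j => measurableSet_le (measurable_Sj hσ hD hV hτ hθi _) measurable_const

lemma measurable_loynes {e : Ω ≃ Ω} (he : Measurable e) (he' : Measurable e.symm) :
    Measurable (loynes e σ D V τ) :=
  (Measurable.liminf fun n => ENNReal.measurable_ofReal.comp
    ((measurable_Zseq hσ hD hV hτ he measurable_const n).comp (he'.iterate n))).ennreal_toReal

end Measurability

theorem stationary_existence_strong_coupling_general
    [MeasurableSpace Ω] (P : Measure Ω) [IsProbabilityMeasure P]
    (θ : Ω ≃ᵐ Ω) (herg : Ergodic (⇑θ) P)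
    (σ D V τ : Ω → ℝ)
    (hσm : Measurable σ) (hDm : Measurable D) (hVm : Measurable V) (hτm : Measurable τ)
    (hσ0 : ∀ ω, 0 ≤ σ ω) (hD0 : ∀ ω, 0 ≤ D ω) (hV0 : ∀ ω, 0 ≤ V ω)
    (hVi : Integrable V P) (hτi : Integrable τ P)
    (hEV : ∫ ω, (V ω - τ ω) ∂P < 0)
    (hsup : 0 < P {ω : Ω | ∀ j : ℕ, Sj (⇑θ.symm) σ D V τ (j + 1) ω ≤ 0}) :
    ∃ U : Ω → ℝ, Measurable U ∧ (∀ ω, 0 ≤ U ω) ∧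
      (∀ᵐ ω ∂P, U (θ ω) = phi σ D V τ (U ω) ω) ∧
      (∀ W : Ω → ℝ, Measurable W → (∀ ω, 0 ≤ W ω) →
        ∀ᵐ ω ∂P, ∃ N : ℕ, ∀ n ≥ N, Zseq (⇑θ) σ D V τ W n ω = U ((⇑θ)^[n] ω)) := by
  set A := renovatingSet θ.symm σ D V τ
  set U := loynes θ.toEquiv σ D V τ
  have hσD (ω : Ω) : 0 ≤ σ ω + D ω := add_nonneg (hσ0 ω) (hD0 ω)
  have hA : MeasurableSet A :=
    measurableSet_renovatingSet hσm hDm hVm hτm θ.symm.measurable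
  have hpast : ∀ᵐ ω ∂P, ∃ m, θ.symm^[m] ω ∈ A :=
    (herg.symm.ae_frequently_iterate_mem hA hsup.ne').mono fun _ h => h.exists
  have hstat : ∀ᵐ ω ∂P, U (θ ω) = phi σ D V τ (U ω) ω :=
    hpast.mono fun _ => loynes_apply_eq_phi θ.toEquiv hσD hV0
  refine ⟨U, measurable_loynes hσm hDm hVm hτm θ.measurable θ.symm.measurable,
    loynes_nonneg θ.toEquiv, hstat, fun W _ hW0 => ?_⟩
  have horbit : ∀ᵐ ω ∂P, ∀ n, U (θ^[n + 1] ω) = phi σ D V τ (U (θ^[n] ω)) (θ^[n] ω) :=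
    ae_all_iff.2 fun n => by
      simpa only [Function.iterate_succ_apply'] using
        (herg.toMeasurePreserving.iterate n).quasiMeasurePreserving.ae hstat
  filter_upwards [horbit, herg.ae_frequently_iterate_mem hA hsup.ne',
    herg.ae_tendsto_birkhoffSum_atBot (hVm.sub hτm) (hVi.sub hτi) hEV]
    with ω hU hvisit hdrift
  obtain ⟨N, hNA, hNdrift⟩ :=
    (hvisit.and_eventually (hdrift.eventually_le_atBot (-W ω))).exists
  have hZN := Zseq_eq_zero_of_mem θ.toEquiv hσD hV0 (hW0 ω)
    (le_neg_iff_add_nonpos_left.1 hNdrift) hNA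
  exact ⟨N, fun n => Zseq_eq_of_le (u := fun n => U (θ^[n] ω)) hU
    (hZN.trans (loynes_eq_zero_of_mem θ.toEquiv hσD hV0 hNA).symm)⟩

/-- Theorem 3.1, existence and strong-coupling convergence:
if E[V − τ] < 0 and P(sup_{j≥1} S_j ≤ 0) > 0, there is a stationary solution U of
U ∘ θ = φ(U, ·) such that every workload sequence Z_n^W couples with (U ∘ θⁿ). -/
theorem stationary_existence_strong_coupling
    [MeasurableSpace Ω] (P : Measure Ω) [IsProbabilityMeasure P]
    (θ : Ω ≃ᵐ Ω) (herg : Ergodic (⇑θ) P)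
    (σ D V τ : Ω → ℝ)
    (hσm : Measurable σ) (hDm : Measurable D) (hVm : Measurable V) (hτm : Measurable τ)
    (hσ0 : ∀ ω, 0 ≤ σ ω) (hD0 : ∀ ω, 0 ≤ D ω) (hV0 : ∀ ω, 0 ≤ V ω) (hτ0 : ∀ ω, 0 ≤ τ ω)
    (hσi : Integrable σ P) (hDi : Integrable D P) (hVi : Integrable V P) (hτi : Integrable τ P)
    (hτpos : ∀ᵐ ω ∂P, 0 < τ ω)
    (hEV : ∫ ω, (V ω - τ ω) ∂P < 0)
    (hsup : 0 < P {ω : Ω | ∀ j : ℕ, Sj (⇑θ.symm) σ D V τ (j + 1) ω ≤ 0}) :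
    ∃ U : Ω → ℝ, Measurable U ∧ (∀ ω, 0 ≤ U ω) ∧
      (∀ᵐ ω ∂P, U (θ ω) = phi σ D V τ (U ω) ω) ∧
      (∀ W : Ω → ℝ, Measurable W → (∀ ω, 0 ≤ W ω) →
        ∀ᵐ ω ∂P, ∃ N : ℕ, ∀ n ≥ N, Zseq (⇑θ) σ D V τ W n ω = U ((⇑θ)^[n] ω)) :=
  stationary_existence_strong_coupling_general P θ herg σ D V τ hσm hDm hVm hτm hσ0 hD0 hV0 hVi hτi
    hEV hsup
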